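/- arXiv:1409.3035 — 7 statements merged into one kernel-verified Lean document; each statement's English description precedes it below -/
import Mathlib

section
/- Let p be an odd prime and c in GF(p) with -c a nonsquare. For distinct nonzero k, k' in GF(p), the solution sets in the projective plane PG(2,p) of x^2 + k y^2 + c k z^2 = 0 and x^2 + k' y^2 + c k' z^2 = 0 are disjoint. -/
theorem stmt_3 (p : ℕ) [Fact p.Prime] (hp : p ≠ 2) (c : ZMod p)
    (hc : ¬ IsSquare (-c)) (k k' : ZMod p) (hk : k ≠ 0) (hk' : k' ≠ 0)
    (hne : k ≠ k') (x y z : ZMod p) (h : ¬ (x = 0 ∧ y = 0 ∧ z = 0)) :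
    ¬ (x ^ 2 + k * y ^ 2 + c * k * z ^ 2 = 0 ∧
       x ^ 2 + k' * y ^ 2 + c * k' * z ^ 2 = 0) := by
  rintro ⟨h1, h2⟩
  have hsub : (k - k') * (y ^ 2 + c * z ^ 2) = 0 := by ring_nf; linear_combination h1 - h2
  have hkk : k - k' ≠ 0 := sub_ne_zero.mpr hne
  have hyz : y ^ 2 + c * z ^ 2 = 0 := by
    rcases mul_eq_zero.mp hsub with h' | h'
    · exact absurd h' hkk
    · exact h'
  have hz : z = 0 := by
    by_contra hz
    exact hc ⟨y / z, by field_simp; linear_combination -hyz⟩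
  subst hz
  have hy : y = 0 := by
    have : y ^ 2 = 0 := by linear_combination hyz
    exact pow_eq_zero_iff (n := 2) (by norm_num) |>.mp this
  subst hy
  have hx : x = 0 := by
    have : x ^ 2 = 0 := by linear_combination h1
    exact pow_eq_zero_iff (n := 2) (by norm_num) |>.mp this
  exact h ⟨hx, rfl, rfl⟩
end

section
/- Let p be an odd prime, c in GF(p) with -c a nonsquare, and for each nonzero k in GF(p) let O_k be the conic x^2 + k y^2 + c k z^2 = 0 in PG(2,p). Then every point of PG(2,p) lies on exactly one of: the line x = 0, the point (1,0,0), or one of the conics O_k, k = 1,...,p-1; i.e., these sets partition PG(2,p). -/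
lemma aniso {p : ℕ} [Fact p.Prime] (c : ZMod p) (hc : ¬ IsSquare (-c))
    (y z : ZMod p) (h : y ^ 2 + c * z ^ 2 = 0) : y = 0 ∧ z = 0 := by
  by_cases hz : z = 0
  · subst hz
    simp at h
    exact ⟨h, rfl⟩
  · exfalso
    apply hc
    refine ⟨y / z, ?_⟩
    field_simp
    linear_combination -h

/-- Every point of `PG(2,p)` lies on exactly one of: the line `x = 0`, the point
`(1,0,0)` (i.e. `y = 0 ∧ z = 0`), or exactly one of the conics
`O_k : x^2 + k y^2 + c k z^2 = 0`, `k ≠ 0`. -/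
theorem stmt_4 (p : ℕ) [Fact p.Prime] (hp : p ≠ 2) (c : ZMod p)
    (hc : ¬ IsSquare (-c)) (x y z : ZMod p) (h : ¬ (x = 0 ∧ y = 0 ∧ z = 0)) :
    (x = 0 ∧ ¬ (y = 0 ∧ z = 0) ∧
      ∀ k : ZMod p, k ≠ 0 → x ^ 2 + k * y ^ 2 + c * k * z ^ 2 ≠ 0) ∨
    ((y = 0 ∧ z = 0) ∧ x ≠ 0 ∧
      ∀ k : ZMod p, k ≠ 0 → x ^ 2 + k * y ^ 2 + c * k * z ^ 2 ≠ 0) ∨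
    (x ≠ 0 ∧ ¬ (y = 0 ∧ z = 0) ∧
      ∃! k : ZMod p, k ≠ 0 ∧ x ^ 2 + k * y ^ 2 + c * k * z ^ 2 = 0) := by
  by_cases hx : x = 0
  · left
    have hyz : ¬ (y = 0 ∧ z = 0) := by tauto
    refine ⟨hx, hyz, fun k hk he => ?_⟩
    subst hx
    have : y ^ 2 + c * z ^ 2 = 0 := by
      have := mul_ne_zero hk (fun hq : y ^ 2 + c * z ^ 2 = 0 => hyz (aniso c hc y z hq))
      by_contra hq
      exact mul_ne_zero hk hq (by linear_combination he)
    exact hyz (aniso c hc y z this)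
  · by_cases hyz : y = 0 ∧ z = 0
    · right; left
      refine ⟨hyz, hx, fun k hk he => ?_⟩
      obtain ⟨hy, hz⟩ := hyz
      subst hy; subst hz
      simp at he
      exact hx he
    · right; right
      have hq : y ^ 2 + c * z ^ 2 ≠ 0 := fun hq => hyz (aniso c hc y z hq)
      refine ⟨hx, hyz, -(x ^ 2) / (y ^ 2 + c * z ^ 2), ⟨?_, ?_⟩, ?_⟩
      · apply div_ne_zero _ hq
        simpa using pow_ne_zero 2 hx
      · field_simp
        ring
      · rintro k ⟨hk, he⟩
        rw [eq_div_iff hq]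
        linear_combination he
end

section
/- Let p be an odd prime, c in GF(p) with -c a nonsquare, and k nonzero. For every point R = (1, r2, r3) on the conic O_k: x^2 + k y^2 + c k z^2 = 0, the tangent line to O_k at R has coordinates (1, k r2, c k r3), and the point P = (1,0,0) does not lie on this tangent. Hence P is an inner point of every conic O_k. -/
/-- The tangent to `O_k` at `R = (1, r2, r3)` is the line `(1, k r2, c k r3)`:
it meets the conic exactly in `R`, and the point `P = (1,0,0)` does not lie on
it.  Hence `P` is an inner point of every conic `O_k`. -/
theorem stmt_6 (p : ℕ) [Fact p.Prime] (hp : p ≠ 2) (c : ZMod p)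
    (hc : ¬ IsSquare (-c)) (k : ZMod p) (hk : k ≠ 0) (r2 r3 : ZMod p)
    (hR : 1 + k * r2 ^ 2 + c * k * r3 ^ 2 = 0) :
    (∀ y z : ZMod p, 1 + k * y ^ 2 + c * k * z ^ 2 = 0 →
      (1 * 1 + (k * r2) * y + (c * k * r3) * z = 0 ↔ y = r2 ∧ z = r3)) ∧
    1 * 1 + (k * r2) * 0 + (c * k * r3) * 0 ≠ 0 := by
  constructor
  · intro y z hyz
    constructor
    · intro ht
      have key : k * ((y - r2) ^ 2 + c * (z - r3) ^ 2) = 0 := by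
        linear_combination hyz + hR - 2 * ht
      have key2 : (y - r2) ^ 2 + c * (z - r3) ^ 2 = 0 :=
        (mul_eq_zero.mp key).resolve_left hk
      by_cases hz : z = r3
      · subst hz
        have : (y - r2) ^ 2 = 0 := by linear_combination key2
        have : y - r2 = 0 := by
          exact pow_eq_zero_iff (n := 2) (by norm_num) |>.mp this
        constructor
        · exact sub_eq_zero.mp this
        · rfl
      · exfalso
        apply hc
        have hz' : z - r3 ≠ 0 := sub_ne_zero.mpr hz
        refine ⟨(y - r2) * (z - r3)⁻¹, ?_⟩
        field_simp
        linear_combination -key2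
    · rintro ⟨rfl, rfl⟩
      linear_combination hR
  · simp
end

section
/- Let p be an odd prime and define, for nonzero distinct α, β in GF(p), the relation α ◇ β to hold iff (-β)(β - α) is a nonzero square in GF(p) when p ≡ 3 (mod 4), and a nonsquare when p ≡ 1 (mod 4). Then α ◇ β implies β ◇ (β^2 α^{-1}). -/
/-- `α ◇ β` iff `(-β)(β - α)` is a nonzero square when `p ≡ 3 (mod 4)`,
and a nonsquare when `p ≡ 1 (mod 4)`. -/
def diamond (p : ℕ) (α β : ZMod p) : Prop :=
  if p % 4 = 3 then IsSquare (-β * (β - α)) ∧ -β * (β - α) ≠ 0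
  else ¬ IsSquare (-β * (β - α))

theorem stmt_10 (p : ℕ) [Fact p.Prime] (hp : p ≠ 2) (α β : ZMod p)
    (hα : α ≠ 0) (hβ : β ≠ 0) (hne : α ≠ β) (h : diamond p α β) :
    diamond p β (β ^ 2 * α⁻¹) := by
  have hc : β * α⁻¹ ≠ 0 := mul_ne_zero hβ (inv_ne_zero hα)
  have key : -(β ^ 2 * α⁻¹) * (β ^ 2 * α⁻¹ - β) = (β * α⁻¹) ^ 2 * (-β * (β - α)) := by
    field_simp
  have hsq : IsSquare (-(β ^ 2 * α⁻¹) * (β ^ 2 * α⁻¹ - β)) ↔ IsSquare (-β * (β - α)) := by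
    rw [key]
    constructor
    · rintro ⟨r, hr⟩
      refine ⟨(β * α⁻¹)⁻¹ * r, ?_⟩
      have : ((β * α⁻¹)⁻¹) ^ 2 * ((β * α⁻¹) ^ 2 * (-β * (β - α))) = -β * (β - α) := by
        rw [← mul_assoc, ← mul_pow, inv_mul_cancel₀ hc, one_pow, one_mul]
      calc -β * (β - α) = ((β * α⁻¹)⁻¹) ^ 2 * ((β * α⁻¹) ^ 2 * (-β * (β - α))) := this.symm
        _ = ((β * α⁻¹)⁻¹) ^ 2 * (r * r) := by rw [← hr]
        _ = (β * α⁻¹)⁻¹ * r * ((β * α⁻¹)⁻¹ * r) := by ring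
    · rintro ⟨r, hr⟩
      exact ⟨β * α⁻¹ * r, by rw [hr]; ring⟩
  unfold diamond at h ⊢
  split_ifs with h3
  · rw [if_pos h3] at h
    refine ⟨hsq.mpr h.1, ?_⟩
    rw [key]
    exact mul_ne_zero (pow_ne_zero _ hc) h.2
  · rw [if_neg h3] at h
    exact fun hs => h (hsq.mp hs)
end

section
/- Let p be an odd prime, c in GF(p) with -c a nonsquare, and α, β distinct nonzero elements of GF(p). Let P = (1,P2,P3) and Q = (1,Q2,Q3) be points on O_β (i.e. 1 + β(P2^2 + c P3^2) = 0 and similarly for Q), P ≠ Q, such that the projective line through P and Q is tangent to O_α (meets O_α in exactly one point). Then the point of tangency is P + Q = (2, P2+Q2, P3+Q3). -/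
/-- If the line through two points `P ≠ Q` of `O_β` is tangent to `O_α`
(i.e. meets `O_α` in exactly one point), then the tangency point is
`P + Q = (2, P2 + Q2, P3 + Q3)`, i.e. after normalizing,
`((P2+Q2)/2, (P3+Q3)/2)`. -/
theorem stmt_12 (p : ℕ) [Fact p.Prime] (hp : p ≠ 2) (c : ZMod p)
    (hc : ¬ IsSquare (-c)) (α β : ZMod p) (hα : α ≠ 0) (hβ : β ≠ 0)
    (hne : α ≠ β) (P2 P3 Q2 Q3 : ZMod p)
    (hP : 1 + β * (P2 ^ 2 + c * P3 ^ 2) = 0)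
    (hQ : 1 + β * (Q2 ^ 2 + c * Q3 ^ 2) = 0)
    (hPQ : (P2, P3) ≠ (Q2, Q3))
    (htan : ∃! w : ZMod p × ZMod p,
        1 + α * (w.1 ^ 2 + c * w.2 ^ 2) = 0 ∧
        (Q2 - P2) * (w.2 - P3) = (Q3 - P3) * (w.1 - P2)) :
    ∀ w : ZMod p × ZMod p,
      (1 + α * (w.1 ^ 2 + c * w.2 ^ 2) = 0 ∧
        (Q2 - P2) * (w.2 - P3) = (Q3 - P3) * (w.1 - P2)) →
      w = ((P2 + Q2) * 2⁻¹, (P3 + Q3) * 2⁻¹) := by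
  rintro w ⟨hw, hl⟩
  have hA : (P2 + Q2) * (P2 - Q2) + c * ((P3 + Q3) * (P3 - Q3)) = 0 := by
    have h' : β * ((P2 + Q2) * (P2 - Q2) + c * ((P3 + Q3) * (P3 - Q3))) = β * 0 := by
      linear_combination hP - hQ
    exact mul_left_cancel₀ hβ h'
  have hd : P2 - Q2 ≠ 0 ∨ P3 - Q3 ≠ 0 := by
    by_contra h
    push_neg at h
    exact hPQ (Prod.ext (sub_eq_zero.mp h.1) (sub_eq_zero.mp h.2))
  -- the linear form x ↦ s x + c s' y is constant on the line; T := value at w minus at P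
  have hT : (P2 + Q2) * (w.1 - P2) + c * ((P3 + Q3) * (w.2 - P3)) = 0 := by
    rcases hd with hd | hd
    · apply mul_left_cancel₀ hd
      linear_combination (w.1 - P2) * hA - c * (P3 + Q3) * hl
    · apply mul_left_cancel₀ hd
      linear_combination (w.2 - P3) * hA + (P2 + Q2) * hl
  -- the reflected point
  have hw' : 1 + α * ((P2 + Q2 - w.1) ^ 2 + c * (P3 + Q3 - w.2) ^ 2) = 0 := by
    linear_combination hw - 2 * α * hT - α * hA
  have hl' : (Q2 - P2) * ((P3 + Q3 - w.2) - P3) = (Q3 - P3) * ((P2 + Q2 - w.1) - P2) := by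
    linear_combination -hl
  obtain ⟨z, hz, hu⟩ := htan
  have e1 := hu w ⟨hw, hl⟩
  have e2 := hu (P2 + Q2 - w.1, P3 + Q3 - w.2) ⟨hw', hl'⟩
  have e : w = (P2 + Q2 - w.1, P3 + Q3 - w.2) := e1.trans e2.symm
  have h2 : (2 : ZMod p) ≠ 0 := by
    intro h
    have h' : (2 : ZMod p) = ((2 : ℕ) : ZMod p) := by norm_num
    rw [h', ZMod.natCast_eq_zero_iff] at h
    exact hp ((Nat.prime_dvd_prime_iff_eq Fact.out Nat.prime_two).mp h)
  have e1' : w.1 = P2 + Q2 - w.1 := congrArg Prod.fst e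
  have e2' : w.2 = P3 + Q3 - w.2 := congrArg Prod.snd e
  apply Prod.ext
  · show w.1 = (P2 + Q2) * 2⁻¹
    rw [eq_mul_inv_iff_mul_eq₀ h2]
    linear_combination e1'
  · show w.2 = (P3 + Q3) * 2⁻¹
    rw [eq_mul_inv_iff_mul_eq₀ h2]
    linear_combination e2'
end

section
/- Let p be an odd prime, c in GF(p) with -c a nonsquare, β nonzero, and P ≠ Q points (1,P2,P3), (1,Q2,Q3) on O_β. If k in {1,...,p-2} satisfies (k+1)^2 + α(P2 + kQ2)^2 + cα(P3 + kQ3)^2 = 0 for some nonzero α ≠ β, then k solves k^2 + [ (2 + 2α(P2Q2 + cP3Q3)) / (1 - αβ^{-1}) ] k + 1 = 0; in particular the product of the two roots of this quadratic is 1. -/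
theorem stmt_13 (p : ℕ) [Fact p.Prime] (hp : p ≠ 2) (c : ZMod p)
    (hc : ¬ IsSquare (-c)) (α β : ZMod p) (hα : α ≠ 0) (hβ : β ≠ 0)
    (hne : α ≠ β) (P2 P3 Q2 Q3 : ZMod p)
    (hP : 1 + β * P2 ^ 2 + c * β * P3 ^ 2 = 0)
    (hQ : 1 + β * Q2 ^ 2 + c * β * Q3 ^ 2 = 0)
    (hPQ : (P2, P3) ≠ (Q2, Q3)) (k : ZMod p)
    (hk : (k + 1) ^ 2 + α * (P2 + k * Q2) ^ 2 + c * α * (P3 + k * Q3) ^ 2 = 0) :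
    k ^ 2 + (2 + 2 * α * (P2 * Q2 + c * P3 * Q3)) / (1 - α * β⁻¹) * k + 1 = 0 := by
  have hd : (1 - α * β⁻¹) ≠ 0 := by
    intro h
    apply hne
    have h1 : α * β⁻¹ = 1 := by linear_combination -h
    field_simp at h1
    exact h1
  have hβi : β * β⁻¹ = 1 := mul_inv_cancel₀ hβ
  have key : (1 - α * β⁻¹) * k ^ 2 + (2 + 2 * α * (P2 * Q2 + c * P3 * Q3)) * k
      + (1 - α * β⁻¹) = 0 := by
    linear_combination hk - α * β⁻¹ * hP - k ^ 2 * α * β⁻¹ * hQ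
      + α * (P2 ^ 2 + c * P3 ^ 2) * hβi + k ^ 2 * α * (Q2 ^ 2 + c * Q3 ^ 2) * hβi
  have hmd : (1 - α * β⁻¹) * ((2 + 2 * α * (P2 * Q2 + c * P3 * Q3)) / (1 - α * β⁻¹))
      = 2 + 2 * α * (P2 * Q2 + c * P3 * Q3) := mul_div_cancel₀ _ hd
  have h2 : (1 - α * β⁻¹) * (k ^ 2 + (2 + 2 * α * (P2 * Q2 + c * P3 * Q3)) / (1 - α * β⁻¹) * k + 1) = 0 := by
    linear_combination key + k * hmd
  exact (mul_eq_zero.mp h2).resolve_left hd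
end

section
/- Let p be an odd prime, c with -c a nonsquare, and suppose B1, B2, B3 are points (1,y_i,z_i) on O_β forming a Poncelet triangle with O_α (i.e., each line B_iB_{i+1} is tangent to O_α, indices mod 3, and B1 + B2 + B3 is proportional to (1,0,0)). Then α = 4β in GF(p). -/
/-- If `B1 B2 B3` is a Poncelet triangle inscribed in `O_β` whose sides are
tangent to `O_α`, then `α = 4β`. -/
theorem stmt_15 (p : ℕ) [Fact p.Prime] (hp : p ≠ 2) (c : ZMod p)
    (hc : ¬ IsSquare (-c)) (α β : ZMod p) (hα : α ≠ 0) (hβ : β ≠ 0)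
    (y1 z1 y2 z2 y3 z3 : ZMod p)
    (hB1 : 1 + β * y1 ^ 2 + c * β * z1 ^ 2 = 0)
    (hB2 : 1 + β * y2 ^ 2 + c * β * z2 ^ 2 = 0)
    (hB3 : 1 + β * y3 ^ 2 + c * β * z3 ^ 2 = 0)
    (hA1 : 2 ^ 2 + α * (y1 + y2) ^ 2 + c * α * (z1 + z2) ^ 2 = 0)
    (hA2 : 2 ^ 2 + α * (y2 + y3) ^ 2 + c * α * (z2 + z3) ^ 2 = 0)
    (hA3 : 2 ^ 2 + α * (y3 + y1) ^ 2 + c * α * (z3 + z1) ^ 2 = 0)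
    (hy : y1 + y2 + y3 = 0) (hz : z1 + z2 + z3 = 0) :
    α = 4 * β := by
  have h1 : y1 + y2 = -y3 := by linear_combination hy
  have h2 : z1 + z2 = -z3 := by linear_combination hz
  rw [h1, h2] at hA1
  linear_combination α * hB3 - β * hA1
end
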